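/- For integers a ≥ b ≥ 0 and a real number q ≥ 4, the Gaussian binomial coefficient satisfies q^(b(a-b)) ≤ [a choose b]_q ≤ (1 + 2/q) · q^(b(a-b)). -/

import Mathlib

/-!
Writing `a = c + b` and reversing the order of the product, the `i`-th factor becomes
`(q^c y - 1) / (y - 1)` with `y = q^(i+1)`, which lies between `q^c` and `q^c · y / (y - 1)`.
The lower bound follows at once. For the upper bound, the Weierstrass product inequality and a
geometric series give `∏ (1 - q^-(i+1)) ≥ 1 - 1/(q - 1)`, hence
`∏ y / (y - 1) ≤ (q - 1)/(q - 2)`, and `(q - 1)/(q - 2) ≤ 1 + 2/q` exactly when `q ≥ 4`.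
-/

open Finset

/-- The Gaussian binomial coefficient for a real parameter `q` and naturals `a ≥ b`:
`[a choose b]_q = ∏_{i=0}^{b-1} (q^(a-i) - 1)/(q^(b-i) - 1)`. -/
noncomputable def gaussBinom (q : ℝ) (a b : ℕ) : ℝ :=
  ∏ i ∈ Finset.range b, (q ^ (a - i) - 1) / (q ^ (b - i) - 1)

theorem one_sub_sum_le_prod_one_sub {ι R : Type*} [CommRing R] [PartialOrder R]
    [IsOrderedRing R] (s : Finset ι) {f : ι → R}
    (h0 : ∀ i ∈ s, 0 ≤ f i) (h1 : ∀ i ∈ s, f i ≤ 1) :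
    1 - ∑ i ∈ s, f i ≤ ∏ i ∈ s, (1 - f i) := by
  classical
  induction s using Finset.induction_on with
  | empty => simp
  | insert a s has ih =>
    rw [sum_insert has, prod_insert has]
    have ha0 := h0 a (mem_insert_self a s)
    have ha1 : 0 ≤ 1 - f a := sub_nonneg.2 (h1 a (mem_insert_self a s))
    have hs := ih (fun i hi => h0 i (mem_insert_of_mem hi)) fun i hi => h1 i (mem_insert_of_mem hi)
    have hsum : 0 ≤ ∑ i ∈ s, f i := sum_nonneg fun i hi => h0 i (mem_insert_of_mem hi)
    calc 1 - (f a + ∑ i ∈ s, f i) ≤ (1 - f a) * (1 - ∑ i ∈ s, f i) := by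
          have hexpand : (1 - f a) * (1 - ∑ i ∈ s, f i) - (1 - (f a + ∑ i ∈ s, f i)) =
              f a * ∑ i ∈ s, f i := by ring
          exact sub_nonneg.1 (hexpand ▸ mul_nonneg ha0 hsum)
      _ ≤ (1 - f a) * ∏ i ∈ s, (1 - f i) := mul_le_mul_of_nonneg_left hs ha1

section LinearOrderedField

variable {K : Type*} [Field K] [LinearOrder K] [IsStrictOrderedRing K]

theorem le_mul_sub_one_div_sub_one {x y : K} (hx : 1 ≤ x) (hy : 1 < y) :
    x ≤ (x * y - 1) / (y - 1) := by
  rw [le_div_iff₀ (sub_pos.2 hy)]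
  linarith

theorem mul_sub_one_div_sub_one_le (x : K) {y : K} (hy : 1 < y) :
    (x * y - 1) / (y - 1) ≤ x * (y / (y - 1)) := by
  rw [mul_div_assoc']
  gcongr
  linarith

theorem sum_range_inv_pow_succ_le {q : K} (hq : 1 < q) (n : ℕ) :
    ∑ i ∈ range n, (q ^ (i + 1))⁻¹ ≤ (q - 1)⁻¹ := by
  have hq0 : 0 < q := zero_lt_one.trans hq
  have hgeom := geom_sum_Ico_le_of_lt_one (m := 1) (n := n + 1) (inv_nonneg.2 hq0.le)
    (inv_lt_one_of_one_lt₀ hq)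
  rw [sum_Ico_eq_sum_range, Nat.add_sub_cancel] at hgeom
  convert hgeom using 1
  · simp [add_comm, inv_pow]
  · field_simp

theorem prod_range_pow_div_pow_sub_one_le {q : K} (hq : 2 < q) (n : ℕ) :
    ∏ i ∈ range n, q ^ (i + 1) / (q ^ (i + 1) - 1) ≤ (q - 1) / (q - 2) := by
  have hq1 : 1 < q := by linarith
  have hpow : ∀ i : ℕ, 1 < q ^ (i + 1) := fun i => one_lt_pow₀ hq1 i.succ_ne_zero
  have hinv : ∀ i : ℕ, q ^ (i + 1) / (q ^ (i + 1) - 1) = (1 - (q ^ (i + 1))⁻¹)⁻¹ := by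
    intro i
    have hy0 := (zero_lt_one.trans (hpow i)).ne'
    have hy1 := (sub_pos.2 (hpow i)).ne'
    field_simp
  have hprod : (q - 2) / (q - 1) ≤ ∏ i ∈ range n, (1 - (q ^ (i + 1))⁻¹) :=
    calc (q - 2) / (q - 1) = 1 - (q - 1)⁻¹ := by
          field_simp [(sub_pos.2 hq1).ne']
          ring
      _ ≤ 1 - ∑ i ∈ range n, (q ^ (i + 1))⁻¹ := by
          gcongr
          exact sum_range_inv_pow_succ_le hq1 n
      _ ≤ _ := one_sub_sum_le_prod_one_sub _
          (fun i _ => inv_nonneg.2 (zero_lt_one.trans (hpow i)).le)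
          fun i _ => inv_le_one_of_one_le₀ (hpow i).le
  rw [prod_congr rfl fun i _ => hinv i, prod_inv_distrib, ← inv_div]
  exact inv_anti₀ (div_pos (by linarith) (by linarith)) hprod

end LinearOrderedField

theorem gaussBinom_add_eq_prod (q : ℝ) (c b : ℕ) :
    gaussBinom q (c + b) b = ∏ i ∈ range b, (q ^ c * q ^ (i + 1) - 1) / (q ^ (i + 1) - 1) := by
  rw [gaussBinom, ← prod_range_reflect]
  refine prod_congr rfl fun i hi => ?_
  have hib := mem_range.1 hi
  rw [← pow_add]
  congr 3 <;> omega

theorem gauss_binom_bounds_q_ge_four (q : ℝ) (a b : ℕ) (hq : 4 ≤ q) (hab : b ≤ a) :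
    q ^ (b * (a - b)) ≤ gaussBinom q a b ∧
      gaussBinom q a b ≤ (1 + 2 / q) * q ^ (b * (a - b)) := by
  obtain ⟨c, rfl⟩ := Nat.exists_eq_add_of_le' hab
  rw [Nat.add_sub_cancel, gaussBinom_add_eq_prod]
  have hq1 : 1 < q := by linarith
  have hpow : ∀ i : ℕ, 1 < q ^ (i + 1) := fun i => one_lt_pow₀ hq1 i.succ_ne_zero
  have hfactor : ∀ i : ℕ, q ^ c ≤ (q ^ c * q ^ (i + 1) - 1) / (q ^ (i + 1) - 1) :=
    fun i => le_mul_sub_one_div_sub_one (one_le_pow₀ hq1.le) (hpow i)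
  have hconst : ∏ _i ∈ range b, q ^ c = q ^ (b * c) := by
    rw [prod_const, card_range, ← pow_mul, mul_comm]
  constructor
  · rw [← hconst]
    exact prod_le_prod (fun _ _ => by positivity) fun i _ => hfactor i
  · calc _ ≤ ∏ i ∈ range b, q ^ c * (q ^ (i + 1) / (q ^ (i + 1) - 1)) :=
          prod_le_prod (fun i _ => (by positivity : (0 : ℝ) ≤ q ^ c).trans (hfactor i))
            fun i _ => mul_sub_one_div_sub_one_le _ (hpow i)
      _ ≤ q ^ (b * c) * ((q - 1) / (q - 2)) := by
          rw [prod_mul_distrib, hconst]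
          gcongr
          exact prod_range_pow_div_pow_sub_one_le (by linarith) b
      _ ≤ (1 + 2 / q) * q ^ (b * c) := by
          rw [mul_comm]
          gcongr
          have hexpand : (1 + 2 / q) * (q - 2) = q - 4 / q := by
            field_simp
            ring
          rw [div_le_iff₀ (by linarith), hexpand]
          linarith [div_le_one_of_le₀ hq (by linarith)]
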